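/- Let ω = 0, g ≠ 0, κ, γ > 0 and d ∈ (−1,1). A triple (A, S, D) ∈ ℂ × ℂ × ℝ is an equilibrium of the Maxwell–Bloch equations (i.e. satisfies −κA + gS = 0, −γS + gAD = 0 and −4g Re( conj(A) S ) − 2γ(D − d) = 0) if and only if either (A, S, D) = (0, 0, d), or g² d > γκ (equivalently C_b > 1) together with D = γκ/g², S = (κ/g)A and |A|² = γ(d g² − γκ)/(2κ g²). In particular, if C_b ≤ 1 then (0, 0, d) is the only equilibrium. -/

import Mathlib

/-!
At `ω = 0` the field equation is linear and forces `S = (κ/g) A`. Substituting, the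
polarization equation factors as `(g D - γκ/g) A = 0`, and the inversion equation becomes
`2κ |A|² = γ (d - D)`. Hence either `A = 0`, and then `S = 0`, `D = d`; or `D = γκ/g²` and
`|A|²` is determined, and its positivity is exactly `γκ < g² d`.
-/

open Complex ComplexConjugate

namespace MaxwellBloch

def IsEquilibrium (g κ γ d : ℝ) (A S : ℂ) (D : ℝ) : Prop :=
  -(κ : ℂ) * A + (g : ℂ) * S = 0 ∧
    -(γ : ℂ) * S + (g : ℂ) * A * (D : ℂ) = 0 ∧
    -4 * g * (conj A * S).re - 2 * γ * (D - d) = 0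

def IsLasing (g κ γ d : ℝ) (A S : ℂ) (D : ℝ) : Prop :=
  γ * κ < g ^ 2 * d ∧ D = γ * κ / g ^ 2 ∧ S = ((κ / g : ℝ) : ℂ) * A ∧
    ‖A‖ ^ 2 = γ * (d * g ^ 2 - γ * κ) / (2 * κ * g ^ 2)

variable {g κ γ d : ℝ} {A S : ℂ} {D : ℝ}

lemma re_conj_mul_ofReal_mul (A : ℂ) (r : ℝ) : (conj A * (r * A)).re = r * normSq A := by
  simp only [mul_re, conj_re, conj_im, ofReal_re, ofReal_im, mul_im, normSq_apply]
  ring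

lemma field_equation_iff (hg : g ≠ 0) :
    -(κ : ℂ) * A + (g : ℂ) * S = 0 ↔ S = ((κ / g : ℝ) : ℂ) * A := by
  have hgC : (g : ℂ) ≠ 0 := ofReal_ne_zero.mpr hg
  push_cast
  constructor
  · intro h
    field_simp
    linear_combination h
  · rintro rfl
    field_simp
    ring

lemma polarization_equation_iff (hg : g ≠ 0) :
    -(γ : ℂ) * (((κ / g : ℝ) : ℂ) * A) + (g : ℂ) * A * (D : ℂ) = 0 ↔
      A = 0 ∨ D = γ * κ / g ^ 2 := by
  have hfactor : -(γ : ℂ) * (((κ / g : ℝ) : ℂ) * A) + (g : ℂ) * A * (D : ℂ) =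
      ((g * D - γ * κ / g : ℝ) : ℂ) * A := by
    push_cast
    ring
  have hD : g * D - γ * κ / g = 0 ↔ D = γ * κ / g ^ 2 := by
    rw [sub_eq_zero]
    field_simp
  rw [hfactor, mul_eq_zero, ofReal_eq_zero, hD, or_comm]

lemma inversion_equation_iff (hg : g ≠ 0) :
    -4 * g * (conj A * (((κ / g : ℝ) : ℂ) * A)).re - 2 * γ * (D - d) = 0 ↔
      2 * κ * normSq A = γ * (d - D) := by
  rw [re_conj_mul_ofReal_mul]
  field_simp
  constructor <;> intro h <;> linarith

theorem isEquilibrium_iff (hg : g ≠ 0) :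
    IsEquilibrium g κ γ d A S D ↔
      S = ((κ / g : ℝ) : ℂ) * A ∧ (A = 0 ∨ D = γ * κ / g ^ 2) ∧
        2 * κ * normSq A = γ * (d - D) := by
  rw [IsEquilibrium, field_equation_iff hg]
  refine and_congr_right fun hS => ?_
  subst hS
  exact and_congr (polarization_equation_iff hg) (inversion_equation_iff hg)

theorem isEquilibrium_zero : IsEquilibrium g κ γ d 0 0 d := by
  simp [IsEquilibrium]

theorem IsLasing.isEquilibrium (hg : g ≠ 0) (hκ : 0 < κ) (h : IsLasing g κ γ d A S D) :
    IsEquilibrium g κ γ d A S D := by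
  obtain ⟨-, hD, hS, hA⟩ := h
  refine (isEquilibrium_iff hg).2 ⟨hS, Or.inr hD, ?_⟩
  rw [← Complex.sq_norm, hA, hD]
  field_simp

theorem IsEquilibrium.eq_zero_or_isLasing (hg : g ≠ 0) (hκ : 0 < κ) (hγ : 0 < γ)
    (h : IsEquilibrium g κ γ d A S D) :
    (A = 0 ∧ S = 0 ∧ D = d) ∨ IsLasing g κ γ d A S D := by
  obtain ⟨hS, hAD, hI⟩ := (isEquilibrium_iff hg).1 h
  by_cases hA : A = 0
  · subst hA
    refine Or.inl ⟨rfl, by simpa using hS, ?_⟩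
    have : γ * (d - D) = 0 := by simpa using hI.symm
    linarith [(mul_eq_zero.mp this).resolve_left hγ.ne']
  · have hD := hAD.resolve_left hA
    have hg2 : 0 < g ^ 2 := by positivity
    have hdD : D < d := by nlinarith [normSq_pos.mpr hA]
    refine Or.inr ⟨?_, hD, hS, ?_⟩
    · rw [hD, div_lt_iff₀ hg2] at hdD
      linarith
    · rw [Complex.sq_norm]
      subst hD
      field_simp at hI ⊢
      linear_combination hI

theorem isEquilibrium_iff_eq_zero_or_isLasing (hg : g ≠ 0) (hκ : 0 < κ) (hγ : 0 < γ) :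
    IsEquilibrium g κ γ d A S D ↔ (A = 0 ∧ S = 0 ∧ D = d) ∨ IsLasing g κ γ d A S D := by
  refine ⟨IsEquilibrium.eq_zero_or_isLasing hg hκ hγ, ?_⟩
  rintro (⟨rfl, rfl, rfl⟩ | hL)
  · exact isEquilibrium_zero
  · exact hL.isEquilibrium hg hκ

end MaxwellBloch

open MaxwellBloch in
theorem maxwell_bloch_equilibria_classification
    (g κ γ d : ℝ) (hg : g ≠ 0) (hκ : 0 < κ) (hγ : 0 < γ)
    (A S : ℂ) (D : ℝ) :
    ((-(κ : ℂ) * A + (g : ℂ) * S = 0 ∧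
        -(γ : ℂ) * S + (g : ℂ) * A * (D : ℂ) = 0 ∧
        -4 * g * ((starRingEnd ℂ) A * S).re - 2 * γ * (D - d) = 0) ↔
      ((A = 0 ∧ S = 0 ∧ D = d) ∨
        (γ * κ < g ^ 2 * d ∧ D = γ * κ / g ^ 2 ∧ S = ((κ / g : ℝ) : ℂ) * A ∧
          ‖A‖ ^ 2 = γ * (d * g ^ 2 - γ * κ) / (2 * κ * g ^ 2)))) ∧
    (g ^ 2 * d / (κ * γ) ≤ 1 →
      (-(κ : ℂ) * A + (g : ℂ) * S = 0 ∧
        -(γ : ℂ) * S + (g : ℂ) * A * (D : ℂ) = 0 ∧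
        -4 * g * ((starRingEnd ℂ) A * S).re - 2 * γ * (D - d) = 0) →
      A = 0 ∧ S = 0 ∧ D = d) := by
  have classification :=
    isEquilibrium_iff_eq_zero_or_isLasing (d := d) (A := A) (S := S) (D := D) hg hκ hγ
  refine ⟨classification, fun hC heq => ?_⟩
  refine (classification.1 heq).resolve_right fun hL => ?_
  rw [div_le_one (mul_pos hκ hγ)] at hC
  linarith [hL.1]
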